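/- arXiv:2003.02581 — 2 statements merged into one kernel-verified Lean document; each statement's English description precedes it below -/
import Mathlib

section
/- If B is a symmetric positive definite m×m real matrix, z = B⁻¹q for some vector q ∈ ℝ^m, and z̃ ∈ ℝ^m is the vector that agrees with y = (B[α])⁻¹ q[α] on an index set α ⊊ {1,...,m} (where B[α] denotes the principal submatrix of B indexed by α and q[α] the corresponding subvector) and is zero elsewhere, then zᵀBz ≥ z̃ᵀBz̃. -/
/-!
Since `B z = q` and `B[α] y = q[α]`, the zero extension `z̃` satisfies the Galerkin relation
`z̃ᵀ B z̃ = z̃ᵀ q = z̃ᵀ B z`. Expanding `(z - z̃)ᵀ B (z - z̃) ≥ 0` with the symmetry of `B` then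
gives `zᵀ B z - z̃ᵀ B z̃ ≥ 0`.
-/

open Matrix

namespace Matrix

section ZeroExtension

variable {ι R : Type*} [Fintype ι] [DecidableEq ι] [NonUnitalNonAssocCommSemiring R] (s : Finset ι)

theorem dite_mem_dotProduct (u : s → R) (w : ι → R) :
    (fun i => if h : i ∈ s then u ⟨i, h⟩ else 0) ⬝ᵥ w = u ⬝ᵥ fun i : s => w i := by
  rw [dotProduct, ← Finset.sum_subset (Finset.subset_univ s) fun i _ hi => by simp [hi],
    ← Finset.sum_coe_sort s]
  exact Finset.sum_congr rfl fun i _ => by simp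

theorem mulVec_dite_mem_apply (B : Matrix ι ι R) (u : s → R) (i : s) :
    (B *ᵥ fun j => if h : j ∈ s then u ⟨j, h⟩ else 0) i
      = (B.submatrix (fun k : s => (k : ι)) (fun k : s => (k : ι)) *ᵥ u) i := by
  rw [mulVec, mulVec, dotProduct_comm, dite_mem_dotProduct, dotProduct_comm]
  rfl

theorem dite_mem_dotProduct_mulVec_dite_mem (B : Matrix ι ι R) (u : s → R) :
    (fun i => if h : i ∈ s then u ⟨i, h⟩ else 0) ⬝ᵥ
        (B *ᵥ fun i => if h : i ∈ s then u ⟨i, h⟩ else 0)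
      = u ⬝ᵥ B.submatrix (fun k : s => (k : ι)) (fun k : s => (k : ι)) *ᵥ u := by
  rw [dite_mem_dotProduct]
  exact congrArg _ (funext (mulVec_dite_mem_apply s B u))

end ZeroExtension

theorem PosDef.mulVec_inv_mulVec {n K : Type*} [Fintype n] [DecidableEq n] [Field K]
    [PartialOrder K] [StarRing K] {M : Matrix n n K} (hM : M.PosDef) (v : n → K) :
    M *ᵥ (M⁻¹ *ᵥ v) = v := by
  rw [mulVec_mulVec, mul_nonsing_inv _ ((isUnit_iff_isUnit_det M).mp hM.isUnit), one_mulVec]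

theorem dotProduct_mulVec_le_of_dotProduct_mulVec_eq {ι R : Type*} [Fintype ι] [CommRing R]
    [PartialOrder R] [IsOrderedAddMonoid R] [StarRing R] [TrivialStar R]
    {B : Matrix ι ι R} (hB : B.PosSemidef) {x z : ι → R}
    (hxz : x ⬝ᵥ B *ᵥ x = x ⬝ᵥ B *ᵥ z) : x ⬝ᵥ B *ᵥ x ≤ z ⬝ᵥ B *ᵥ z := by
  have hsymm : z ⬝ᵥ B *ᵥ x = x ⬝ᵥ B *ᵥ z := by
    rw [dotProduct_mulVec, ← mulVec_transpose, (isHermitian_iff_isSymm.mp hB.isHermitian).eq,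
      dotProduct_comm]
  have hnonneg := hB.dotProduct_mulVec_nonneg (z - x)
  rwa [star_trivial, mulVec_sub, sub_dotProduct, dotProduct_sub, dotProduct_sub, hsymm, ← hxz,
    sub_self, sub_zero, sub_nonneg] at hnonneg

end Matrix

theorem stmt0_general {m : ℕ} (B : Matrix (Fin m) (Fin m) ℝ) (hB : B.PosDef)
    (q : Fin m → ℝ) (α : Finset (Fin m))
    (z : Fin m → ℝ) (hz : z = B⁻¹.mulVec q)
    (y : ↥α → ℝ)
    (hy : y = (B.submatrix (fun i : ↥α => (i : Fin m)) (fun i : ↥α => (i : Fin m)))⁻¹.mulVec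
        (fun i : ↥α => q i))
    (ztilde : Fin m → ℝ)
    (hzt : ztilde = fun i => if h : i ∈ α then y ⟨i, h⟩ else 0) :
    z ⬝ᵥ B.mulVec z ≥ ztilde ⬝ᵥ B.mulVec ztilde := by
  have hBz : B *ᵥ z = q := hz ▸ hB.mulVec_inv_mulVec q
  have hBαy := hy ▸ (hB.submatrix Subtype.val_injective).mulVec_inv_mulVec fun i : α => q i
  have galerkin : ztilde ⬝ᵥ B *ᵥ ztilde = ztilde ⬝ᵥ B *ᵥ z := by
    rw [hzt, dite_mem_dotProduct_mulVec_dite_mem, hBαy, hBz, dite_mem_dotProduct]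
  exact dotProduct_mulVec_le_of_dotProduct_mulVec_eq hB.posSemidef galerkin

/-- For `B` symmetric positive definite, `z = B⁻¹q`, and `z̃` the
zero-extension of `y = (B[α])⁻¹ q[α]` for a proper nonempty index set `α`,
we have `zᵀBz ≥ z̃ᵀBz̃`. -/
theorem stmt0 {m : ℕ} (B : Matrix (Fin m) (Fin m) ℝ) (hB : B.PosDef)
    (q : Fin m → ℝ) (α : Finset (Fin m)) (hne : α.Nonempty) (hprop : α ⊂ Finset.univ)
    (z : Fin m → ℝ) (hz : z = B⁻¹.mulVec q)
    (y : ↥α → ℝ)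
    (hy : y = (B.submatrix (fun i : ↥α => (i : Fin m)) (fun i : ↥α => (i : Fin m)))⁻¹.mulVec
        (fun i : ↥α => q i))
    (ztilde : Fin m → ℝ)
    (hzt : ztilde = fun i => if h : i ∈ α then y ⟨i, h⟩ else 0) :
    z ⬝ᵥ B.mulVec z ≥ ztilde ⬝ᵥ B.mulVec ztilde :=
  stmt0_general B hB q α z hz y hy ztilde hzt
end

section
/- If the residual r = b - Ax is not orthogonal to the column space of V (where V has full column rank and A is symmetric positive definite), then the orthogonal projection step x' = x + V(VᵀAV)⁻¹Vᵀr strictly decreases the A-norm error: ‖x' - x*‖_A² < ‖x - x*‖_A². -/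
/-!
With `e = x - xs` and `y = (VᵀAV)⁻¹Vᵀr`, the new error is `e + Vy`. Since `Ae = -r`, expanding
the energy gives `‖e + Vy‖²_A = ‖e‖²_A - 2 yᵀVᵀr + yᵀ(VᵀAV)y = ‖e‖²_A - yᵀVᵀr`, and
`yᵀVᵀr = (Vᵀr)ᵀ(VᵀAV)⁻¹(Vᵀr) > 0` because `VᵀAV`, and hence its inverse, is positive definite
when `V` has full column rank.
-/

open Matrix

namespace Matrix

variable {m n : Type*} [Fintype n]

theorem mulVec_injective_of_rank_eq_card {K : Type*} [Field K] {V : Matrix m n K}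
    (hV : V.rank = Fintype.card n) : Function.Injective V.mulVec := by
  rw [mulVec_injective_iff, linearIndependent_iff_card_eq_finrank_span, ← hV,
    rank_eq_finrank_span_cols]
  rfl

variable [Fintype m] {R : Type*} [CommRing R]

theorem dotProduct_mulVec_add_mulVec_self {A : Matrix n n R} (hA : A.IsSymm) (e : n → R)
    (V : Matrix n m R) (y : m → R) :
    (e + V *ᵥ y) ⬝ᵥ A *ᵥ (e + V *ᵥ y) =
      e ⬝ᵥ A *ᵥ e + 2 * (y ⬝ᵥ Vᵀ *ᵥ (A *ᵥ e)) + y ⬝ᵥ (Vᵀ * A * V) *ᵥ y := by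
  have hpull (w : n → R) : V *ᵥ y ⬝ᵥ w = y ⬝ᵥ Vᵀ *ᵥ w := by
    rw [dotProduct_comm, dotProduct_transpose_mulVec]
  have hsymm : e ⬝ᵥ A *ᵥ (V *ᵥ y) = V *ᵥ y ⬝ᵥ A *ᵥ e := by
    simpa only [hA.eq] using dotProduct_transpose_mulVec A e (V *ᵥ y)
  have hquad : V *ᵥ y ⬝ᵥ A *ᵥ (V *ᵥ y) = y ⬝ᵥ (Vᵀ * A * V) *ᵥ y := by
    rw [hpull, mulVec_mulVec, mulVec_mulVec]
  simp only [mulVec_add, dotProduct_add, add_dotProduct]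
  rw [hsymm, hquad, hpull]
  ring

end Matrix

/-- if the residual is not orthogonal to the column space of `V`,
the projection step strictly decreases the A-norm error. -/
theorem stmt4 {n m : ℕ} (A : Matrix (Fin n) (Fin n) ℝ) (hA : A.PosDef)
    (b xs : Fin n → ℝ) (hxs : A.mulVec xs = b)
    (V : Matrix (Fin n) (Fin m) ℝ) (hV : V.rank = m)
    (x r : Fin n → ℝ) (hr : r = b - A.mulVec x)
    (hperp : Vᵀ.mulVec r ≠ 0)
    (x' : Fin n → ℝ)
    (hx' : x' = x + V.mulVec ((Vᵀ * A * V)⁻¹.mulVec (Vᵀ.mulVec r))) :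
    (x' - xs) ⬝ᵥ A.mulVec (x' - xs) < (x - xs) ⬝ᵥ A.mulVec (x - xs) := by
  set B := Vᵀ * A * V
  set y := B⁻¹ *ᵥ (Vᵀ *ᵥ r)
  have hB : B.PosDef := by
    simpa only [conjTranspose_eq_transpose_of_trivial] using
      hA.conjTranspose_mul_mul_same (mulVec_injective_of_rank_eq_card (by simpa using hV))
  have hBy : B *ᵥ y = Vᵀ *ᵥ r := by
    rw [mulVec_mulVec, mul_nonsing_inv B ((isUnit_iff_isUnit_det B).mp hB.isUnit), one_mulVec]
  have hAe : A *ᵥ (x - xs) = -r := by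
    rw [mulVec_sub, hxs, hr, neg_sub]
  have hcross : y ⬝ᵥ Vᵀ *ᵥ (A *ᵥ (x - xs)) = -(y ⬝ᵥ Vᵀ *ᵥ r) := by
    rw [hAe, mulVec_neg, dotProduct_neg]
  have hgain : 0 < y ⬝ᵥ Vᵀ *ᵥ r := by
    have := hB.inv.dotProduct_mulVec_pos hperp
    rwa [star_trivial, dotProduct_comm] at this
  have hstep : x' - xs = (x - xs) + V *ᵥ y := by
    rw [hx']; abel
  rw [hstep, dotProduct_mulVec_add_mulVec_self (isHermitian_iff_isSymm.mp hA.isHermitian),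
    hcross, hBy]
  linarith
end
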